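/- arXiv:2001.00134 — 4 statements merged into one kernel-verified Lean document; each statement's English description precedes it below -/
import Mathlib

section
/- Let Q be an irreducible regular single birth Q-matrix on ℤ≥0 and let N ≥ 1 be an integer. Consider the linear system x_i = Σ_{1≤j≤N, j≠i} (q(i,j)/q_i)·x_j + 1/q_i (1 ≤ i ≤ N). Then: (1) the system has a unique solution (x^{(N)}_1, …, x^{(N)}_N) ∈ ℝ^N; (2) this solution satisfies x^{(N)}_k = x^{(N)}_1·Σ_{n=0}^{k−1} F_n^{(0)} − Σ_{n=0}^{k−1} d_n for 1 ≤ k ≤ N; (3) the solution is strictly positive; (4) limsup_{N→∞} x^{(N)}_1 ≥ d. -/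
open scoped ENNReal NNReal BigOperators Classical Topology
open Filter Set

noncomputable section

/-- `q` is a Q-matrix: nonnegative off-diagonal entries, and for every state `i` the
off-diagonal row sums converge to `q_i := -q i i ∈ (0,∞)`. -/
structure IsQMatrix {E : Type*} (q : E → E → ℝ) : Prop where
  offdiag_nonneg : ∀ i j, i ≠ j → 0 ≤ q i j
  diag_neg : ∀ i, 0 < -q i i
  row_hasSum : ∀ i, HasSum (fun j => if j = i then 0 else q i j) (-q i i)

/-- Irreducibility: any two distinct states are joined by a finite chain of positive entries. -/
def MatIrreducible {E : Type*} (M : E → E → ℝ) : Prop :=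
  ∀ i j : E, i ≠ j → Relation.TransGen (fun a b => 0 < M a b) i j

/-- Regularity (non-explosiveness) of a Q-matrix. -/
def QRegular {E : Type*} (q : E → E → ℝ) : Prop :=
  ∃ lam : ℝ, 0 < lam ∧
    ∀ u : E → ℝ, (∀ i, 0 ≤ u i) → (∀ i, u i ≤ 1) →
      (∀ i, HasSum (fun j => q i j * u j) (lam * u i)) → ∀ i, u i = 0

/-- The embedding chain `Π(i,j) = q(i,j)/q_i` for `j ≠ i`, `Π(i,i) = 0`, as `ℝ≥0∞`. -/
def embed {E : Type*} (q : E → E → ℝ) (i j : E) : ℝ≥0∞ :=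
  if j = i then 0 else ENNReal.ofReal (q i j / (-q i i))

/-- `x` is the minimal nonnegative solution of the system `x i = ∑ j, A i j * x j + g i`. -/
def IsMinSol {ι : Type*} (A : ι → ι → ℝ≥0∞) (g : ι → ℝ≥0∞) (x : ι → ℝ≥0∞) : Prop :=
  (∀ i, x i = (∑' j, A i j * x j) + g i) ∧
    ∀ y : ι → ℝ≥0∞, (∀ i, y i = (∑' j, A i j * y j) + g i) → ∀ i, x i ≤ y i

/-- Recurrence of a stochastic `ℝ≥0∞`-matrix at a state `o`: the minimal nonnegative
solution of `u i = ∑_{j ≠ o} P i j * u j + P i o` (for `i ≠ o`) is identically 1. -/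
def RecurrentAt {E : Type*} (P : E → E → ℝ≥0∞) (o : E) : Prop :=
  ∀ u : {i : E // i ≠ o} → ℝ≥0∞,
    IsMinSol (fun i j : {i : E // i ≠ o} => P i.1 j.1) (fun i => P i.1 o) u → ∀ i, u i = 1

/-- Recurrence of a stochastic `ℝ≥0∞`-matrix (at some state). -/
def MatRecurrent {E : Type*} (P : E → E → ℝ≥0∞) : Prop := ∃ o : E, RecurrentAt P o

/-- `m l i = 𝔼_i σ_H ^ l`: the family of moments of the return time to `H`,
defined inductively via minimal nonnegative solutions. -/
def IsMomentSeq {E : Type*} (q : E → E → ℝ) (H : Set E) (m : ℕ → E → ℝ≥0∞) : Prop :=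
  (∀ i, m 0 i = 1) ∧
    ∀ l : ℕ,
      IsMinSol (fun i j => if j ∈ H then 0 else embed q i j)
        (fun i => (((l : ℝ≥0∞) + 1) / ENNReal.ofReal (-q i i)) * m l i) (m (l + 1))

/-- A stochastic matrix. -/
def IsStochastic {E : Type*} (P : E → E → ℝ) : Prop :=
  (∀ i j, 0 ≤ P i j) ∧ ∀ i, HasSum (P i) 1

/-- `n`-step transition "probabilities" of `P`, valued in `ℝ≥0∞`. -/
def nstepE {E : Type*} (P : E → E → ℝ) : ℕ → E → E → ℝ≥0∞
  | 0 => fun i j => if i = j then 1 else 0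
  | n + 1 => fun i j => ∑' k, nstepE P n i k * ENNReal.ofReal (P k j)

/-- Aperiodicity: every state has period 1 (the gcd of its positive return times is 1). -/
def MatAperiodic {E : Type*} (P : E → E → ℝ) : Prop :=
  ∀ i : E, ∀ d : ℕ, (∀ n : ℕ, 0 < n → 0 < nstepE P n i i → d ∣ n) → d = 1

/-- `sigmaDist P H n i = ℙ_i (σ_H = n + 1)`, where `σ_H = inf {n ≥ 1 : X n ∈ H}` is the
return time to `H` of the chain with transition matrix `P` started at `i`. -/
def sigmaDist {E : Type*} (P : E → E → ℝ) (H : Set E) : ℕ → E → ℝ≥0∞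
  | 0 => fun i => ∑' j, if j ∈ H then ENNReal.ofReal (P i j) else 0
  | n + 1 => fun i => ∑' j, if j ∈ H then 0 else ENNReal.ofReal (P i j) * sigmaDist P H n j

/-- Recurrence of the discrete-time chain: `ℙ_i (σ_H < ∞) = 1` for every `i`. -/
def DRecurrent {E : Type*} (P : E → E → ℝ) (H : Set E) : Prop :=
  ∀ i, (∑' n, sigmaDist P H n i) = 1

/-- `dMoment P H l i = 𝔼_i σ_H ^ l` (for a recurrent chain). -/
def dMoment {E : Type*} (P : E → E → ℝ) (H : Set E) (l : ℕ) (i : E) : ℝ≥0∞ :=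
  ∑' n : ℕ, ((n + 1 : ℕ) : ℝ≥0∞) ^ l * sigmaDist P H n i

/-- A single birth Q-matrix on ℕ. -/
def IsSingleBirth (q : ℕ → ℕ → ℝ) : Prop :=
  (∀ i, 0 < q i (i + 1)) ∧ ∀ i j, 2 ≤ j → q i (i + j) = 0

/-- `sbF q n i = F_n^{(i)}` of single birth theory. -/
def sbF (q : ℕ → ℕ → ℝ) : ℕ → ℕ → ℝ
  | n, i =>
    if i = n then 1
    else (1 / q n (n + 1)) *
      ∑ k ∈ (Finset.Ico i n).attach,
        (∑ j ∈ Finset.range (k.1 + 1), q n j) * sbF q k.1 i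
  termination_by n i => n
  decreasing_by exact (Finset.mem_Ico.mp k.2).2

/-- `sbd q n = d_n` of single birth theory. -/
def sbd (q : ℕ → ℕ → ℝ) : ℕ → ℝ
  | 0 => 0
  | n + 1 =>
    (1 / q (n + 1) (n + 2)) *
      (1 + ∑ k ∈ (Finset.range (n + 1)).attach,
        (∑ j ∈ Finset.range (k.1 + 1), q (n + 1) j) * sbd q k.1)
  termination_by n => n
  decreasing_by exact Finset.mem_range.mp k.2

/-- `d = sup_k (∑_{n=0}^k d_n) / (∑_{n=0}^k F_n^{(0)})`, valued in `ℝ≥0∞`. -/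
def sbdConst (q : ℕ → ℕ → ℝ) : ℝ≥0∞ :=
  ⨆ k : ℕ, ENNReal.ofReal
    ((∑ n ∈ Finset.range (k + 1), sbd q n) / (∑ n ∈ Finset.range (k + 1), sbF q n 0))

/-- Solutions of the truncated single-birth system
`x i = ∑_{1 ≤ j ≤ N, j ≠ i} (q i j / q_i) x j + 1 / q_i` for `1 ≤ i ≤ N`. -/
def sbTruncSol (q : ℕ → ℕ → ℝ) (N : ℕ) (x : ℕ → ℝ) : Prop :=
  ∀ i, 1 ≤ i → i ≤ N →
    x i = (∑ j ∈ Finset.Icc 1 N, if j = i then 0 else (q i j / (-q i i)) * x j) + 1 / (-q i i)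

/-- The Q-matrix with `q(i, i+1) = i+1` and `q(i, 0) = α_i` (for `i ≥ 1`). -/
def catQ (a : ℕ → ℝ) : ℕ → ℕ → ℝ := fun i j =>
  if j = i + 1 then (i + 1 : ℝ)
  else if j = 0 ∧ 1 ≤ i then a i
  else if j = i then -((i + 1 : ℝ) + if 1 ≤ i then a i else 0)
  else 0

/-- `α_i = (log i)^{-γ}` for `i ≥ 3`, `α_1 = α_2 = 0`. -/
def logAlpha (γ : ℝ) : ℕ → ℝ := fun i => if 3 ≤ i then Real.log i ^ (-γ) else 0

/-- The stochastic matrix with `P(i, i+1) = p_i` and `P(i, 0) = 1 - p_i`. -/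
def birthP (p : ℕ → ℝ) : ℕ → ℕ → ℝ := fun i j =>
  if j = i + 1 then p i else if j = 0 then 1 - p i else 0

namespace SBAux

variable {q : ℕ → ℕ → ℝ}

/-- Partial row sums `q_n^{(k)}`. -/
def Qk (q : ℕ → ℕ → ℝ) (n k : ℕ) : ℝ := ∑ j ∈ Finset.range (k+1), q n j

/-- `∑_{n<k} F_n^{(0)}`. -/
def SF (q : ℕ → ℕ → ℝ) (k : ℕ) : ℝ := ∑ n ∈ Finset.range k, sbF q n 0

/-- `∑_{n<k} d_n`. -/
def Sd (q : ℕ → ℕ → ℝ) (k : ℕ) : ℝ := ∑ n ∈ Finset.range k, sbd q n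

lemma qzero (hsb : IsSingleBirth q) {i j : ℕ} (h : i + 2 ≤ j) : q i j = 0 := by
  have := hsb.2 i (j - i) (by omega)
  rwa [show i + (j - i) = j by omega] at this

lemma qoff (hq : IsQMatrix q) {i j : ℕ} (h : j ≠ i) : 0 ≤ q i j :=
  hq.offdiag_nonneg i j (Ne.symm h)

lemma rowsum (hq : IsQMatrix q) (hsb : IsSingleBirth q) (i : ℕ) :
    -q i i = ∑ j ∈ Finset.range (i+2), (if j = i then 0 else q i j) := by
  have h : ∀ j ∉ Finset.range (i+2), (if j = i then 0 else q i j) = 0 := by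
    intro j hj
    have hj' : i + 2 ≤ j := by simpa [Finset.mem_range, not_lt] using hj
    have hne : j ≠ i := by omega
    simp [hne, qzero hsb hj']
  refine ((hq.row_hasSum i).unique ?_)
  convert hasSum_sum_of_ne_finset_zero (L := SummationFilter.unconditional ℕ) h using 2 with j
  congr 1

lemma rowsum' (hq : IsQMatrix q) (hsb : IsSingleBirth q) (i : ℕ) :
    -q i i = (∑ j ∈ Finset.range i, q i j) + q i (i+1) := by
  rw [rowsum hq hsb i, Finset.sum_range_succ, Finset.sum_range_succ]
  have h1 : (i+1 : ℕ) ≠ i := by omega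
  rw [if_neg h1, if_pos rfl, Finset.sum_congr rfl (fun j hj => ?_)]
  · ring
  · have : j ≠ i := by have := Finset.mem_range.mp hj; omega
    rw [if_neg this]

lemma Qk_nonneg (hq : IsQMatrix q) {n k : ℕ} (h : k < n) : 0 ≤ Qk q n k := by
  refine Finset.sum_nonneg fun j hj => qoff hq ?_
  have := Finset.mem_range.mp hj; omega

lemma sbF_zero : sbF q 0 0 = 1 := by rw [sbF]; simp

lemma sbF_succ (n : ℕ) (hn : 1 ≤ n) :
    sbF q n 0 = (1 / q n (n+1)) * ∑ k ∈ Finset.range n, Qk q n k * sbF q k 0 := by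
  rw [sbF]
  have h0 : (0 : ℕ) ≠ n := by omega
  rw [if_neg h0]
  congr 1
  rw [Finset.sum_attach (Finset.Ico 0 n) (fun k => (∑ j ∈ Finset.range (k+1), q n j) * sbF q k 0)]
  simp only [Qk, Finset.range_eq_Ico]

lemma sbd_zero : sbd q 0 = 0 := by rw [sbd]

lemma sbd_succ (n : ℕ) :
    sbd q (n+1) = (1 / q (n+1) (n+2)) * (1 + ∑ k ∈ Finset.range (n+1), Qk q (n+1) k * sbd q k) := by
  rw [sbd]
  congr 2
  exact Finset.sum_attach (Finset.range (n+1)) (fun k => (∑ j ∈ Finset.range (k+1), q (n+1) j) * sbd q k)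

lemma sbF_nonneg (hq : IsQMatrix q) (hsb : IsSingleBirth q) : ∀ n, 0 ≤ sbF q n 0 := by
  intro n
  induction n using Nat.strong_induction_on with
  | _ n ih =>
    rcases Nat.eq_zero_or_pos n with h | h
    · subst h; rw [sbF_zero]; norm_num
    · rw [sbF_succ n h]
      have hp : 0 < q n (n+1) := hsb.1 n
      refine mul_nonneg (by positivity) (Finset.sum_nonneg fun k hk => ?_)
      have hk' := Finset.mem_range.mp hk
      exact mul_nonneg (Qk_nonneg hq hk') (ih k hk')

lemma sbd_nonneg (hq : IsQMatrix q) (hsb : IsSingleBirth q) : ∀ n, 0 ≤ sbd q n := by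
  intro n
  induction n using Nat.strong_induction_on with
  | _ n ih =>
    rcases n with _ | m
    · rw [sbd_zero]
    · rw [sbd_succ]
      have hp : 0 < q (m+1) (m+2) := hsb.1 (m+1)
      refine mul_nonneg (by positivity) ?_
      have : 0 ≤ ∑ k ∈ Finset.range (m+1), Qk q (m+1) k * sbd q k := by
        refine Finset.sum_nonneg fun k hk => ?_
        have hk' := Finset.mem_range.mp hk
        exact mul_nonneg (Qk_nonneg hq (by omega)) (ih k (by omega))
      linarith

lemma SF_pos (hq : IsQMatrix q) (hsb : IsSingleBirth q) {k : ℕ} (hk : 1 ≤ k) :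
    0 < SF q k := by
  have h1 : (1:ℝ) ≤ SF q k := by
    have : sbF q 0 0 ≤ SF q k := by
      refine Finset.single_le_sum (fun n _ => sbF_nonneg hq hsb n) ?_
      exact Finset.mem_range.mpr (by omega)
    rwa [sbF_zero] at this
  linarith

lemma Sd_nonneg (hq : IsQMatrix q) (hsb : IsSingleBirth q) (k : ℕ) : 0 ≤ Sd q k :=
  Finset.sum_nonneg fun n _ => sbd_nonneg hq hsb n

lemma SF_zero : SF q 0 = 0 := by simp [SF]
lemma Sd_zero : Sd q 0 = 0 := by simp [Sd]
lemma SF_one : SF q 1 = 1 := by simp [SF, sbF_zero]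
lemma Sd_one : Sd q 1 = 0 := by simp [Sd, sbd_zero]

/-- The key `F` identity. -/
lemma idF (hq : IsQMatrix q) (hsb : IsSingleBirth q) {k : ℕ} (hk : 1 ≤ k) :
    q k (k+1) * SF q (k+1) = (-q k k) * SF q k - ∑ j ∈ Finset.range k, q k j * SF q j := by
  have hswap : ∑ j ∈ Finset.range k, q k j * (SF q k - SF q j)
      = ∑ m ∈ Finset.range k, Qk q k m * sbF q m 0 := by
    have : ∀ j ∈ Finset.range k, q k j * (SF q k - SF q j)
        = ∑ m ∈ Finset.Ico j k, q k j * sbF q m 0 := by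
      intro j hj
      have hj' := Finset.mem_range.mp hj
      rw [← Finset.mul_sum, Finset.sum_Ico_eq_sub _ (le_of_lt hj')]
      rfl
    rw [Finset.sum_congr rfl this]
    rw [Finset.range_eq_Ico, Finset.sum_Ico_Ico_comm]
    refine Finset.sum_congr rfl fun m hm => ?_
    rw [Qk, Finset.sum_mul]
    refine Finset.sum_congr ?_ fun j _ => rfl
    rw [Finset.range_eq_Ico]
  have hrec : q k (k+1) * sbF q k 0 = ∑ m ∈ Finset.range k, Qk q k m * sbF q m 0 := by
    rw [sbF_succ k hk, ← mul_assoc, mul_one_div, div_self (ne_of_gt (hsb.1 k)), one_mul]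
  have hSF : SF q (k+1) = SF q k + sbF q k 0 := Finset.sum_range_succ _ k
  have hsplit : ∑ j ∈ Finset.range k, q k j * (SF q k - SF q j)
      = (∑ j ∈ Finset.range k, q k j) * SF q k - ∑ j ∈ Finset.range k, q k j * SF q j := by
    rw [Finset.sum_mul, ← Finset.sum_sub_distrib]
    exact Finset.sum_congr rfl fun j _ => by ring
  rw [hSF, rowsum' hq hsb k, mul_add, hrec, ← hswap, hsplit]
  ring

/-- The key `d` identity (for `k ≥ 1`). -/
lemma idD (hq : IsQMatrix q) (hsb : IsSingleBirth q) {k : ℕ} (hk : 1 ≤ k) :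
    q k (k+1) * Sd q (k+1) = (-q k k) * Sd q k - (∑ j ∈ Finset.range k, q k j * Sd q j) + 1 := by
  have hswap : ∑ j ∈ Finset.range k, q k j * (Sd q k - Sd q j)
      = ∑ m ∈ Finset.range k, Qk q k m * sbd q m := by
    have : ∀ j ∈ Finset.range k, q k j * (Sd q k - Sd q j)
        = ∑ m ∈ Finset.Ico j k, q k j * sbd q m := by
      intro j hj
      have hj' := Finset.mem_range.mp hj
      rw [← Finset.mul_sum, Finset.sum_Ico_eq_sub _ (le_of_lt hj')]
      rfl
    rw [Finset.sum_congr rfl this]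
    rw [Finset.range_eq_Ico, Finset.sum_Ico_Ico_comm]
    refine Finset.sum_congr rfl fun m hm => ?_
    rw [Qk, Finset.sum_mul]
    refine Finset.sum_congr ?_ fun j _ => rfl
    rw [Finset.range_eq_Ico]
  have hrec : q k (k+1) * sbd q k = 1 + ∑ m ∈ Finset.range k, Qk q k m * sbd q m := by
    obtain ⟨m, rfl⟩ : ∃ m, k = m + 1 := ⟨k - 1, by omega⟩
    rw [sbd_succ m, ← mul_assoc, mul_one_div, div_self (ne_of_gt (hsb.1 (m+1))), one_mul]
  have hSd : Sd q (k+1) = Sd q k + sbd q k := Finset.sum_range_succ _ k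
  have hsplit : ∑ j ∈ Finset.range k, q k j * (Sd q k - Sd q j)
      = (∑ j ∈ Finset.range k, q k j) * Sd q k - ∑ j ∈ Finset.range k, q k j * Sd q j := by
    rw [Finset.sum_mul, ← Finset.sum_sub_distrib]
    exact Finset.sum_congr rfl fun j _ => by ring
  rw [hSd, rowsum' hq hsb k, mul_add, hrec, ← hswap, hsplit]
  ring

section Sol

variable {N : ℕ} {x : ℕ → ℝ}

/-- Multiplied-out form of the equation. -/
lemma eq_mul (hq : IsQMatrix q) (hx : sbTruncSol q N x) {i : ℕ} (h1 : 1 ≤ i) (h2 : i ≤ N) :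
    (-q i i) * x i = (∑ j ∈ Finset.Icc 1 N, if j = i then 0 else q i j * x j) + 1 := by
  have hqi : (-q i i) ≠ 0 := ne_of_gt (hq.diag_neg i)
  have hqi' : q i i ≠ 0 := by intro h; apply hqi; rw [h]; ring
  rw [hx i h1 h2, mul_add, Finset.mul_sum]
  congr 1
  · refine Finset.sum_congr rfl fun j _ => ?_
    split_ifs with h
    · ring
    · field_simp
  · field_simp

lemma sum_reduce_lt (hsb : IsSingleBirth q) {i : ℕ} (h1 : 1 ≤ i) (h2 : i < N) :
    (∑ j ∈ Finset.Icc 1 N, if j = i then 0 else q i j * x j)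
      = (∑ j ∈ Finset.Ico 1 i, q i j * x j) + q i (i+1) * x (i+1) := by
  have hsub : Finset.Icc 1 (i+1) ⊆ Finset.Icc 1 N := by
    apply Finset.Icc_subset_Icc_right; omega
  rw [← Finset.sum_subset hsub]
  · rw [← Finset.Ico_add_one_right_eq_Icc, Finset.sum_Ico_succ_top (by omega), Finset.sum_Ico_succ_top (by omega)]
    have hne : (i+1 : ℕ) ≠ i := by omega
    rw [if_neg hne, if_pos rfl]
    have : ∀ j ∈ Finset.Ico 1 i, (if j = i then (0:ℝ) else q i j * x j) = q i j * x j := by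
      intro j hj
      have := Finset.mem_Ico.mp hj
      rw [if_neg (by omega)]
    rw [Finset.sum_congr rfl this]
    ring
  · intro j hj hj'
    have hj1 := Finset.mem_Icc.mp hj
    have : i + 2 ≤ j := by
      rcases Finset.mem_Icc.mp hj with ⟨ha, hb⟩
      by_contra hc
      exact hj' (Finset.mem_Icc.mpr ⟨ha, by omega⟩)
    rw [if_neg (by omega), qzero hsb this, zero_mul]

lemma sum_reduce_eq (hN : 1 ≤ N) :
    (∑ j ∈ Finset.Icc 1 N, if j = N then 0 else q N j * x j)
      = ∑ j ∈ Finset.Ico 1 N, q N j * x j := by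
  rw [← Finset.Ico_add_one_right_eq_Icc, Finset.sum_Ico_succ_top (by omega), if_pos rfl, add_zero]
  refine Finset.sum_congr rfl fun j hj => ?_
  have := Finset.mem_Ico.mp hj
  rw [if_neg (by omega)]

/-- The recurrence formula for any solution. -/
lemma formula (hq : IsQMatrix q) (hsb : IsSingleBirth q) (hx : sbTruncSol q N x) :
    ∀ k, 1 ≤ k → k ≤ N → x k = x 1 * SF q k - Sd q k := by
  intro k
  induction k using Nat.strong_induction_on with
  | _ k ih =>
    intro hk1 hkN
    rcases Nat.lt_or_ge k 2 with hk2 | hk2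
    · have : k = 1 := by omega
      subst this
      rw [SF_one, Sd_one]; ring
    · obtain ⟨m, rfl⟩ : ∃ m, k = m + 1 := ⟨k - 1, by omega⟩
      have hm1 : 1 ≤ m := by omega
      have hmN : m < N := by omega
      have heq := eq_mul hq hx hm1 (le_of_lt hmN)
      rw [sum_reduce_lt hsb hm1 hmN] at heq
      -- substitute the formula for x j, j ≤ m
      have hxm : x m = x 1 * SF q m - Sd q m := ih m (by omega) hm1 (by omega)
      have hsum : ∑ j ∈ Finset.Ico 1 m, q m j * x j
          = ∑ j ∈ Finset.Ico 1 m, q m j * (x 1 * SF q j - Sd q j) := by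
        refine Finset.sum_congr rfl fun j hj => ?_
        have hj' := Finset.mem_Ico.mp hj
        rw [ih j (by omega) hj'.1 (by omega)]
      have hzero0 : ∑ j ∈ Finset.Ico 1 m, q m j * (x 1 * SF q j - Sd q j)
          = ∑ j ∈ Finset.range m, q m j * (x 1 * SF q j - Sd q j) := by
        rw [Finset.range_eq_Ico, Finset.sum_eq_sum_Ico_succ_bot (show 0 < m by omega)
          (fun j => q m j * (x 1 * SF q j - Sd q j)), SF_zero, Sd_zero]
        simp
      rw [hsum, hzero0, hxm] at heq
      -- now solve for x (m+1)
      have hp : q m (m+1) ≠ 0 := ne_of_gt (hsb.1 m)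
      have hF := idF hq hsb hm1
      have hD := idD hq hsb hm1
      have hexp : ∑ j ∈ Finset.range m, q m j * (x 1 * SF q j - Sd q j)
          = x 1 * (∑ j ∈ Finset.range m, q m j * SF q j)
            - ∑ j ∈ Finset.range m, q m j * Sd q j := by
        rw [Finset.mul_sum, ← Finset.sum_sub_distrib]
        exact Finset.sum_congr rfl fun j _ => by ring
      rw [hexp] at heq
      have key : q m (m+1) * x (m+1) = q m (m+1) * (x 1 * SF q (m+1) - Sd q (m+1)) := by
        have e1 : q m (m+1) * (x 1 * SF q (m+1) - Sd q (m+1))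
            = x 1 * (q m (m+1) * SF q (m+1)) - q m (m+1) * Sd q (m+1) := by ring
        rw [e1, hF, hD]
        nlinarith [heq]
      exact mul_left_cancel₀ hp key

/-- The value of `x 1` for any solution. -/
lemma x1_eq (hq : IsQMatrix q) (hsb : IsSingleBirth q) (hN : 1 ≤ N) (hx : sbTruncSol q N x) :
    x 1 = Sd q (N+1) / SF q (N+1) := by
  have heq := eq_mul hq hx hN (le_refl N)
  rw [sum_reduce_eq hN] at heq
  have hsum : ∑ j ∈ Finset.Ico 1 N, q N j * x j
      = ∑ j ∈ Finset.range N, q N j * (x 1 * SF q j - Sd q j) := by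
    have h1 : ∀ j ∈ Finset.Ico 1 N, q N j * x j = q N j * (x 1 * SF q j - Sd q j) := by
      intro j hj
      have hj' := Finset.mem_Ico.mp hj
      rw [formula hq hsb hx j hj'.1 (by omega)]
    rw [Finset.sum_congr rfl h1, Finset.range_eq_Ico, Finset.sum_eq_sum_Ico_succ_bot
      (show 0 < N by omega) (fun j => q N j * (x 1 * SF q j - Sd q j)), SF_zero, Sd_zero]
    simp
  have hxN : x N = x 1 * SF q N - Sd q N := formula hq hsb hx N hN (le_refl N)
  rw [hsum, hxN] at heq
  have hexp : ∑ j ∈ Finset.range N, q N j * (x 1 * SF q j - Sd q j)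
      = x 1 * (∑ j ∈ Finset.range N, q N j * SF q j)
        - ∑ j ∈ Finset.range N, q N j * Sd q j := by
    rw [Finset.mul_sum, ← Finset.sum_sub_distrib]
    exact Finset.sum_congr rfl fun j _ => by ring
  rw [hexp] at heq
  have hF := idF hq hsb hN
  have hD := idD hq hsb hN
  have hp : 0 < q N (N+1) := hsb.1 N
  have hSF : 0 < SF q (N+1) := SF_pos hq hsb (by omega)
  have key : q N (N+1) * (x 1 * SF q (N+1) - Sd q (N+1)) = 0 := by
    linear_combination x 1 * hF - hD + heq
  have : x 1 * SF q (N+1) - Sd q (N+1) = 0 := by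
    rcases mul_eq_zero.mp key with h | h
    · exact absurd h (ne_of_gt hp)
    · exact h
  field_simp
  linarith

lemma eq_mul_iff (hq : IsQMatrix q) {i : ℕ}
    (h : (-q i i) * x i = (∑ j ∈ Finset.Icc 1 N, if j = i then 0 else q i j * x j) + 1) :
    x i = (∑ j ∈ Finset.Icc 1 N, if j = i then 0 else (q i j / (-q i i)) * x j) + 1/(-q i i) := by
  have hqi : (0:ℝ) < -q i i := hq.diag_neg i
  have hrhs : (∑ j ∈ Finset.Icc 1 N, if j = i then 0 else (q i j/(-q i i)) * x j) + 1/(-q i i)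
      = ((∑ j ∈ Finset.Icc 1 N, if j = i then 0 else q i j * x j) + 1)/(-q i i) := by
    rw [add_div, Finset.sum_div]
    congr 1
    refine Finset.sum_congr rfl fun j _ => ?_
    split_ifs
    · simp
    · ring
  rw [hrhs, ← h, mul_div_cancel_left₀ _ (ne_of_gt hqi)]

lemma exists_sol (hq : IsQMatrix q) (hsb : IsSingleBirth q) {N : ℕ} (hN : 1 ≤ N) :
    sbTruncSol q N (fun k => (Sd q (N+1) / SF q (N+1)) * SF q k - Sd q k) := by
  set c := Sd q (N+1) / SF q (N+1) with hc
  have hSFpos : 0 < SF q (N+1) := SF_pos hq hsb (by omega)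
  have hcS : c * SF q (N+1) = Sd q (N+1) := div_mul_cancel₀ _ (ne_of_gt hSFpos)
  have hlin : ∀ (r : ℕ) (s : Finset ℕ), (∑ j ∈ s, q r j * (c * SF q j - Sd q j))
      = c * (∑ j ∈ s, q r j * SF q j) - ∑ j ∈ s, q r j * Sd q j := by
    intro r s
    rw [Finset.mul_sum, ← Finset.sum_sub_distrib]
    exact Finset.sum_congr rfl fun j _ => by ring
  have hIcoF : ∀ (r m : ℕ), 1 ≤ m → (∑ j ∈ Finset.Ico 1 m, q r j * SF q j)
      = ∑ j ∈ Finset.range m, q r j * SF q j := by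
    intro r m hm
    rw [Finset.range_eq_Ico, Finset.sum_eq_sum_Ico_succ_bot (show 0 < m by omega)
      (fun j => q r j * SF q j), SF_zero, mul_zero, zero_add]
  have hIcoD : ∀ (r m : ℕ), 1 ≤ m → (∑ j ∈ Finset.Ico 1 m, q r j * Sd q j)
      = ∑ j ∈ Finset.range m, q r j * Sd q j := by
    intro r m hm
    rw [Finset.range_eq_Ico, Finset.sum_eq_sum_Ico_succ_bot (show 0 < m by omega)
      (fun j => q r j * Sd q j), Sd_zero, mul_zero, zero_add]
  set xf : ℕ → ℝ := fun k => c * SF q k - Sd q k with hxf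
  intro i h1 h2
  apply eq_mul_iff (x := xf) hq
  rcases Nat.lt_or_ge i N with hiN | hiN
  · rw [sum_reduce_lt hsb h1 hiN]
    simp only [hxf]
    rw [hlin i, hIcoF i i h1, hIcoD i i h1]
    have hF := idF hq hsb h1
    have hD := idD hq hsb h1
    linear_combination hD - c * hF
  · have hi : i = N := by omega
    subst hi
    rw [sum_reduce_eq hN]
    simp only [hxf]
    rw [hlin i, hIcoF i i h1, hIcoD i i h1]
    have hF := idF hq hsb h1
    have hD := idD hq hsb h1
    linear_combination hD - c * hF + q i (i+1) * hcS

lemma coef_le_one (hq : IsQMatrix q) (hsb : IsSingleBirth q) {N m : ℕ} (hm : 1 ≤ m) :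
    (∑ j ∈ Finset.Icc 1 N, if j = m then 0 else q m j / (-q m m)) ≤ 1 := by
  have hqm : (0:ℝ) < -q m m := hq.diag_neg m
  have key : (∑ j ∈ Finset.Icc 1 N, if j = m then 0 else q m j) ≤ -q m m := by
    have hsub1 : Finset.Icc 1 N ⊆ Finset.range (N + m + 2) := by
      intro j hj
      have := Finset.mem_Icc.mp hj
      exact Finset.mem_range.mpr (by omega)
    have h1 : (∑ j ∈ Finset.Icc 1 N, if j = m then 0 else q m j)
        ≤ ∑ j ∈ Finset.range (N + m + 2), if j = m then 0 else q m j := by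
      refine Finset.sum_le_sum_of_subset_of_nonneg hsub1 fun j _ _ => ?_
      split_ifs with h
      · exact le_refl 0
      · exact qoff hq h
    have h2 : (∑ j ∈ Finset.range (N + m + 2), if j = m then 0 else q m j)
        = ∑ j ∈ Finset.range (m + 2), if j = m then 0 else q m j := by
      symm
      refine Finset.sum_subset (Finset.range_subset_range.mpr (by omega)) ?_
      intro j hj hj'
      have hj2 : m + 2 ≤ j := by simpa [Finset.mem_range, not_lt] using hj'
      rw [if_neg (by omega : ¬ j = m), qzero hsb hj2]
    rw [h2, ← rowsum hq hsb m] at h1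
    exact h1
  have expand : (-q m m) * (∑ j ∈ Finset.Icc 1 N, if j = m then 0 else q m j / (-q m m))
      = ∑ j ∈ Finset.Icc 1 N, if j = m then 0 else q m j := by
    rw [Finset.mul_sum]
    refine Finset.sum_congr rfl fun j _ => ?_
    split_ifs
    · ring
    · have hqm' : q m m ≠ 0 := by intro h; rw [h] at hqm; simp at hqm
      field_simp
  have h5 : (-q m m) * (∑ j ∈ Finset.Icc 1 N, if j = m then 0 else q m j / (-q m m))
      ≤ (-q m m) * 1 := by
    rw [mul_one, expand]; exact key
  exact le_of_mul_le_mul_left h5 hqm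

lemma sum_ge_min (hq : IsQMatrix q) {N m : ℕ} (hm : m ∈ Finset.Icc 1 N) (w : ℕ → ℝ)
    (hmin : ∀ j ∈ Finset.Icc 1 N, w m ≤ w j) :
    (∑ j ∈ Finset.Icc 1 N, if j = m then 0 else q m j / (-q m m)) * w m
      ≤ ∑ j ∈ Finset.Icc 1 N, (if j = m then 0 else (q m j / (-q m m)) * w j) := by
  have hqm : (0:ℝ) < -q m m := hq.diag_neg m
  rw [Finset.sum_mul]
  refine Finset.sum_le_sum fun j hj => ?_
  split_ifs with h
  · rw [zero_mul]
  · exact mul_le_mul_of_nonneg_left (hmin j hj) (div_nonneg (qoff hq h) (le_of_lt hqm))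

/-- Positivity of solutions. -/
lemma sol_pos (hq : IsQMatrix q) (hsb : IsSingleBirth q) {N : ℕ} (hN : 1 ≤ N)
    (hx : sbTruncSol q N x) : ∀ i, 1 ≤ i → i ≤ N → 0 < x i := by
  have hne : (Finset.Icc 1 N).Nonempty := ⟨1, Finset.mem_Icc.mpr ⟨le_refl 1, hN⟩⟩
  obtain ⟨m, hm, hmin⟩ := Finset.exists_min_image (Finset.Icc 1 N) x hne
  obtain ⟨hm1, hm2⟩ := Finset.mem_Icc.mp hm
  have hqm : (0:ℝ) < -q m m := hq.diag_neg m
  have hpos : 0 < x m := by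
    by_contra hcon
    push_neg at hcon
    have heq := hx m hm1 hm2
    have h1 := sum_ge_min hq hm x hmin
    have h2 := coef_le_one hq hsb (N := N) hm1
    have h3 : (1:ℝ) * x m ≤ (∑ j ∈ Finset.Icc 1 N, if j = m then 0 else q m j / (-q m m)) * x m :=
      mul_le_mul_of_nonpos_right h2 hcon
    have h4 : 0 < 1/(-q m m) := by positivity
    linarith
  intro i hi1 hi2
  exact lt_of_lt_of_le hpos (hmin i (Finset.mem_Icc.mpr ⟨hi1, hi2⟩))

/-- Comparison: solutions of the `M+1` system dominate solutions of the `M` system. -/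
lemma compare (hq : IsQMatrix q) (hsb : IsSingleBirth q) {M : ℕ} (hM : 1 ≤ M)
    {x z : ℕ → ℝ} (hx : sbTruncSol q M x) (hz : sbTruncSol q (M+1) z) :
    ∀ i, 1 ≤ i → i ≤ M → x i ≤ z i := by
  set w : ℕ → ℝ := fun i => z i - x i with hwdef
  have hzpos : 0 < z (M+1) := sol_pos hq hsb (by omega) hz (M+1) (by omega) (le_refl _)
  -- the equation satisfied by w on [1, M]
  have hw : ∀ i, 1 ≤ i → i ≤ M →
      w i = (∑ j ∈ Finset.Icc 1 M, if j = i then 0 else (q i j / (-q i i)) * w j)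
        + (q i (M+1) / (-q i i)) * z (M+1) + 1/(-q i i) - 1/(-q i i) := by
    intro i h1 h2
    have hzi := hz i h1 (by omega)
    have hxi := hx i h1 h2
    have hsplit : (∑ j ∈ Finset.Icc 1 (M+1), if j = i then 0 else (q i j / (-q i i)) * z j)
        = (∑ j ∈ Finset.Icc 1 M, if j = i then 0 else (q i j / (-q i i)) * z j)
          + (q i (M+1) / (-q i i)) * z (M+1) := by
      rw [← Finset.Ico_add_one_right_eq_Icc, Finset.sum_Ico_succ_top (by omega), Finset.Ico_add_one_right_eq_Icc]
      rw [if_neg (by omega : ¬ (M+1) = i)]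
    rw [hsplit] at hzi
    have hcomb : (∑ j ∈ Finset.Icc 1 M, if j = i then 0 else (q i j / (-q i i)) * z j)
        - (∑ j ∈ Finset.Icc 1 M, if j = i then 0 else (q i j / (-q i i)) * x j)
        = ∑ j ∈ Finset.Icc 1 M, if j = i then 0 else (q i j / (-q i i)) * w j := by
      rw [← Finset.sum_sub_distrib]
      refine Finset.sum_congr rfl fun j _ => ?_
      split_ifs
      · ring
      · simp only [hwdef]; ring
    simp only [hwdef]
    rw [← hcomb, hzi, hxi]
    ring
  -- nonnegativity of w on [1, M]
  have main : ∀ i ∈ Finset.Icc 1 M, 0 ≤ w i := by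
    by_contra hcon
    push_neg at hcon
    obtain ⟨i0, hi0, hi0neg⟩ := hcon
    obtain ⟨m, hm, hmin⟩ := Finset.exists_min_image (Finset.Icc 1 M) w ⟨i0, hi0⟩
    have hmneg : w m < 0 := lt_of_le_of_lt (hmin i0 hi0) hi0neg
    -- inductive propagation to the top
    have key : ∀ t : ℕ, ∀ m : ℕ, m + t = M → 1 ≤ m →
        (∀ j ∈ Finset.Icc 1 M, w m ≤ w j) → w m < 0 → False := by
      intro t
      induction t with
      | zero =>
        intro m hmt hm1 hmin' hneg
        have hmM : m = M := by omega
        have hqm : (0:ℝ) < -q m m := hq.diag_neg m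
        have heq := hw m hm1 (by omega)
        have h1 := sum_ge_min hq (N := M) (Finset.mem_Icc.mpr ⟨hm1, by omega⟩) w hmin'
        have h2 := coef_le_one hq hsb (N := M) hm1
        have h3 : 1 * w m ≤ (∑ j ∈ Finset.Icc 1 M, if j = m then 0 else q m j / (-q m m)) * w m :=
          mul_le_mul_of_nonpos_right h2 (le_of_lt hneg)
        have heps : 0 < (q m (M+1) / (-q m m)) * z (M+1) := by
          have : 0 < q m (M+1) := by rw [hmM]; exact hsb.1 M
          positivity
        linarith
      | succ t ih =>
        intro m hmt hm1 hmin' hneg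
        have hmM : m < M := by omega
        have hqm : (0:ℝ) < -q m m := hq.diag_neg m
        have heq := hw m hm1 (by omega)
        have h1 := sum_ge_min hq (N := M) (Finset.mem_Icc.mpr ⟨hm1, by omega⟩) w hmin'
        have h2 := coef_le_one hq hsb (N := M) hm1
        have h3 : 1 * w m ≤ (∑ j ∈ Finset.Icc 1 M, if j = m then 0 else q m j / (-q m m)) * w m :=
          mul_le_mul_of_nonpos_right h2 (le_of_lt hneg)
        have heps : 0 ≤ (q m (M+1) / (-q m m)) * z (M+1) := by
          have : 0 ≤ q m (M+1) := qoff hq (by omega)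
          positivity
        -- single term bound: the sum minus c * w m dominates the (m+1)-term
        have hsingle : (q m (m+1) / (-q m m)) * (w (m+1) - w m)
            ≤ (∑ j ∈ Finset.Icc 1 M, if j = m then 0 else (q m j / (-q m m)) * w j)
              - (∑ j ∈ Finset.Icc 1 M, if j = m then 0 else q m j / (-q m m)) * w m := by
          rw [Finset.sum_mul, ← Finset.sum_sub_distrib]
          have hterm : ∀ j ∈ Finset.Icc 1 M,
              0 ≤ (if j = m then 0 else (q m j / (-q m m)) * w j)
                - (if j = m then 0 else q m j / (-q m m)) * w m := by
            intro j hj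
            split_ifs with h
            · simp
            · rw [← mul_sub]
              exact mul_nonneg (div_nonneg (qoff hq h) (le_of_lt hqm))
                (by linarith [hmin' j hj])
          have hmem : m + 1 ∈ Finset.Icc 1 M := Finset.mem_Icc.mpr ⟨by omega, by omega⟩
          have := Finset.single_le_sum hterm hmem
          calc (q m (m+1) / (-q m m)) * (w (m+1) - w m)
              = (if m+1 = m then 0 else (q m (m+1) / (-q m m)) * w (m+1))
                - (if m+1 = m then 0 else q m (m+1) / (-q m m)) * w m := by
                rw [if_neg (by omega : ¬ m+1 = m), if_neg (by omega : ¬ m+1 = m)]; ring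
            _ ≤ _ := this
        -- conclude w (m+1) ≤ w m
        have hwm1 : w (m+1) ≤ w m := by
          have hsE : 0 < q m (m+1) / (-q m m) := div_pos (hsb.1 m) hqm
          by_contra hcon2
          push_neg at hcon2
          have : 0 < (q m (m+1) / (-q m m)) * (w (m+1) - w m) :=
            mul_pos hsE (by linarith)
          linarith
        exact ih (m+1) (by omega) (by omega)
          (fun j hj => le_trans hwm1 (hmin' j hj)) (lt_of_le_of_lt hwm1 hneg)
    obtain ⟨hma, hmb⟩ := Finset.mem_Icc.mp hm
    exact key (M - m) m (by omega) hma hmin hmneg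
  intro i h1 h2
  have := main i (Finset.mem_Icc.mpr ⟨h1, h2⟩)
  simp only [hwdef] at this
  linarith

end Sol

lemma ratio_mono (hq : IsQMatrix q) (hsb : IsSingleBirth q) (k : ℕ) :
    Sd q (k+1) / SF q (k+1) ≤ Sd q (k+2) / SF q (k+2) := by
  rcases Nat.eq_zero_or_pos k with hk | hk
  · subst hk
    have h1 : Sd q 1 / SF q 1 = 0 := by rw [Sd_one, SF_one]; simp
    rw [h1]
    exact div_nonneg (Sd_nonneg hq hsb 2) (le_of_lt (SF_pos hq hsb (by omega)))
  · have hx := exists_sol hq hsb (N := k) hk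
    have hz := exists_sol hq hsb (N := k+1) (by omega)
    have hcmp := compare hq hsb hk hx hz 1 (le_refl 1) hk
    simpa [SF_one, Sd_one] using hcmp

end SBAux
/-- The truncated single-birth system: existence, uniqueness, recurrence formula,
positivity, and the limsup lower bound. -/
theorem single_birth_truncated (q : ℕ → ℕ → ℝ)
    (hq : IsQMatrix q) (hirr : MatIrreducible q) (hreg : QRegular q)
    (hsb : IsSingleBirth q) (N : ℕ) (hN : 1 ≤ N) :
    (∃ x : ℕ → ℝ, sbTruncSol q N x) ∧
    (∀ x x' : ℕ → ℝ, sbTruncSol q N x → sbTruncSol q N x' →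
      ∀ i, 1 ≤ i → i ≤ N → x i = x' i) ∧
    (∀ x : ℕ → ℝ, sbTruncSol q N x → ∀ k, 1 ≤ k → k ≤ N →
      x k = x 1 * (∑ n ∈ Finset.range k, sbF q n 0) - ∑ n ∈ Finset.range k, sbd q n) ∧
    (∀ x : ℕ → ℝ, sbTruncSol q N x → ∀ i, 1 ≤ i → i ≤ N → 0 < x i) ∧
    (∀ xs : ℕ → ℕ → ℝ, (∀ M, 1 ≤ M → sbTruncSol q M (xs M)) →
      sbdConst q ≤ Filter.limsup (fun M => ENNReal.ofReal (xs M 1)) atTop) := by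
  refine ⟨⟨_, SBAux.exists_sol hq hsb hN⟩, ?_, ?_, ?_, ?_⟩
  · intro x x' hx hx' i h1 h2
    rw [SBAux.formula hq hsb hx i h1 h2, SBAux.formula hq hsb hx' i h1 h2,
      SBAux.x1_eq hq hsb hN hx, SBAux.x1_eq hq hsb hN hx']
  · intro x hx k h1 h2
    exact SBAux.formula hq hsb hx k h1 h2
  · intro x hx i h1 h2
    exact SBAux.sol_pos hq hsb hN hx i h1 h2
  · intro xs hxs
    have hx1 : ∀ M, 1 ≤ M → xs M 1 = SBAux.Sd q (M+1) / SBAux.SF q (M+1) := fun M hM =>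
      SBAux.x1_eq hq hsb hM (hxs M hM)
    have hmono : Monotone (fun k => SBAux.Sd q (k+1) / SBAux.SF q (k+1)) :=
      monotone_nat_of_le_succ (fun k => SBAux.ratio_mono hq hsb k)
    have hconst : sbdConst q
        = ⨆ k : ℕ, ENNReal.ofReal (SBAux.Sd q (k+1) / SBAux.SF q (k+1)) := rfl
    rw [hconst, limsup_eq_iInf_iSup_of_nat]
    refine iSup_le fun k => le_iInf fun n => ?_
    have hik : k ≤ max n (max 1 k) := le_trans (le_max_right 1 k) (le_max_right n _)
    have hin : n ≤ max n (max 1 k) := le_max_left _ _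
    have hi1 : 1 ≤ max n (max 1 k) := le_trans (le_max_left 1 k) (le_max_right n _)
    refine le_trans ?_ (le_iSup_of_le (max n (max 1 k)) (le_iSup_of_le hin (le_refl _)))
    rw [hx1 _ hi1]
    exact ENNReal.ofReal_le_ofReal (hmono hik)
end
end

section
/- Let Q be an irreducible regular single birth Q-matrix on ℤ≥0. Then the Q-process is ergodic (i.e. 𝔼_i σ_0 < ∞ for every i) if and only if d < ∞. -/
open scoped ENNReal NNReal BigOperators Classical Topology
open Filter Set

noncomputable section

section YanChenAux

variable {q : ℕ → ℕ → ℝ}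

lemma sb_zero (hsb : IsSingleBirth q) {n j : ℕ} (h : n + 2 ≤ j) : q n j = 0 := by
  have := hsb.2 n (j - n) (by omega)
  rwa [show n + (j - n) = j by omega] at this

lemma row_id (hq : IsQMatrix q) (hsb : IsSingleBirth q) (n : ℕ) :
    -q n n = (∑ j ∈ Finset.range n, q n j) + q n (n + 1) := by
  have h1 := hq.row_hasSum n
  have h2 : HasSum (fun j => @ite ℝ (j = n) (Classical.propDecidable _) 0 (q n j))
      (∑ j ∈ Finset.range (n + 2), @ite ℝ (j = n) (Classical.propDecidable _) 0 (q n j)) := by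
    apply hasSum_sum_of_ne_finset_zero
    intro j hj
    simp only [Finset.mem_range, not_lt] at hj
    have hne : j ≠ n := by omega
    rw [if_neg hne, sb_zero hsb (show n + 2 ≤ j by omega)]
  rw [h1.unique h2, Finset.sum_range_succ, Finset.sum_range_succ,
    if_pos rfl, if_neg (show ¬(n + 1 = n) by omega)]
  have h3 : ∀ j ∈ Finset.range n,
      (@ite ℝ (j = n) (Classical.propDecidable _) 0 (q n j)) = q n j := by
    intro j hj
    have : j ≠ n := by have := Finset.mem_range.mp hj; omega
    rw [if_neg this]
  rw [Finset.sum_congr rfl h3]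
  ring

lemma qpart_nonneg (hq : IsQMatrix q) {n k : ℕ} (h : k < n) :
    0 ≤ ∑ j ∈ Finset.range (k + 1), q n j := by
  apply Finset.sum_nonneg
  intro j hj
  have hj' := Finset.mem_range.mp hj
  exact hq.offdiag_nonneg n j (by omega)

lemma sbF_eq (q : ℕ → ℕ → ℝ) (n : ℕ) :
    sbF q n 0 = if 0 = n then 1 else
      (1 / q n (n + 1)) * ∑ k ∈ Finset.range n,
        (∑ j ∈ Finset.range (k + 1), q n j) * sbF q k 0 := by
  rw [sbF]
  congr 1
  rw [Finset.sum_attach (Finset.Ico 0 n)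
    (fun k => (∑ j ∈ Finset.range (k + 1), q n j) * sbF q k 0), ← Finset.range_eq_Ico]

lemma sbd_eq (q : ℕ → ℕ → ℝ) (n : ℕ) :
    sbd q (n + 1) = (1 / q (n + 1) (n + 2)) *
      (1 + ∑ k ∈ Finset.range (n + 1), (∑ j ∈ Finset.range (k + 1), q (n + 1) j) * sbd q k) := by
  rw [sbd]
  congr 2
  exact Finset.sum_attach (Finset.range (n + 1))
    (fun k => (∑ j ∈ Finset.range (k + 1), q (n + 1) j) * sbd q k)

lemma sbF_rec (hsb : IsSingleBirth q) {n : ℕ} (hn : 1 ≤ n) :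
    q n (n + 1) * sbF q n 0
      = ∑ k ∈ Finset.range n, (∑ j ∈ Finset.range (k + 1), q n j) * sbF q k 0 := by
  rw [sbF_eq, if_neg (by omega)]
  field_simp [(hsb.1 n).ne']

lemma sbd_rec (hsb : IsSingleBirth q) (n : ℕ) :
    q (n + 1) (n + 2) * sbd q (n + 1)
      = 1 + ∑ k ∈ Finset.range (n + 1), (∑ j ∈ Finset.range (k + 1), q (n + 1) j) * sbd q k := by
  rw [sbd_eq]
  field_simp [(hsb.1 (n + 1)).ne']

lemma sbF_nonneg (hq : IsQMatrix q) (hsb : IsSingleBirth q) : ∀ n, 0 ≤ sbF q n 0 := by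
  intro n
  induction n using Nat.strong_induction_on with
  | _ n ih =>
    rw [sbF_eq]
    split
    · norm_num
    · next h =>
      apply mul_nonneg (by have := hsb.1 n; positivity)
      apply Finset.sum_nonneg
      intro k hk
      have hk' := Finset.mem_range.mp hk
      exact mul_nonneg (qpart_nonneg hq hk') (ih k hk')

lemma sbd_nonneg (hq : IsQMatrix q) (hsb : IsSingleBirth q) : ∀ n, 0 ≤ sbd q n := by
  intro n
  induction n using Nat.strong_induction_on with
  | _ n ih =>
    match n with
    | 0 => rw [sbd]
    | n + 1 =>
      rw [sbd_eq]
      apply mul_nonneg (by have := hsb.1 (n + 1); positivity)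
      have : 0 ≤ ∑ k ∈ Finset.range (n + 1),
          (∑ j ∈ Finset.range (k + 1), q (n + 1) j) * sbd q k := by
        apply Finset.sum_nonneg
        intro k hk
        have hk' := Finset.mem_range.mp hk
        exact mul_nonneg (qpart_nonneg hq hk') (ih k (by omega))
      linarith

lemma abel_sum (a ν : ℕ → ℝ) : ∀ n, ∑ j ∈ Finset.range n, a j * (ν n - ν j)
    = ∑ k ∈ Finset.range n, (∑ j ∈ Finset.range (k + 1), a j) * (ν (k + 1) - ν k)
  | 0 => by simp
  | (n + 1) => by
    rw [Finset.sum_range_succ (f := fun k => (∑ j ∈ Finset.range (k + 1), a j) * (ν (k + 1) - ν k)),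
      ← abel_sum a ν n]
    have h1 : ∑ j ∈ Finset.range (n + 1), a j * (ν (n + 1) - ν j)
        = ∑ j ∈ Finset.range (n + 1), (a j * (ν n - ν j) + a j * (ν (n + 1) - ν n)) :=
      Finset.sum_congr rfl fun j _ => by ring
    rw [h1, Finset.sum_add_distrib, ← Finset.sum_mul, Finset.sum_range_succ (f := fun j => a j * (ν n - ν j))]
    ring

lemma key_equiv (hq : IsQMatrix q) (hsb : IsSingleBirth q) (ν : ℕ → ℝ) (n : ℕ) :
    (-q n n * ν n = (∑ j ∈ Finset.range n, q n j * ν j) + q n (n + 1) * ν (n + 1) + 1)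
    ↔ q n (n + 1) * (ν (n + 1) - ν n)
        = (∑ k ∈ Finset.range n, (∑ j ∈ Finset.range (k + 1), q n j) * (ν (k + 1) - ν k)) - 1 := by
  have row := row_id hq hsb n
  have e1 : ∑ j ∈ Finset.range n, q n j * (ν n - ν j)
      = (∑ j ∈ Finset.range n, q n j) * ν n - ∑ j ∈ Finset.range n, q n j * ν j := by
    rw [Finset.sum_mul, ← Finset.sum_sub_distrib]
    exact Finset.sum_congr rfl fun j _ => by ring
  have eab : (∑ k ∈ Finset.range n, (∑ j ∈ Finset.range (k + 1), q n j) * (ν (k + 1) - ν k))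
      = (∑ j ∈ Finset.range n, q n j) * ν n - ∑ j ∈ Finset.range n, q n j * ν j :=
    (abel_sum (q n) ν n).symm.trans e1
  constructor <;> intro h <;> linear_combination -h + ν n * row - eab

lemma conv_tsum (hsb : IsSingleBirth q) (y : ℕ → ℝ≥0∞) (n : ℕ) :
    (∑' j, (if j = 0 then 0 else embed q n j) * y j)
      = (∑ j ∈ Finset.Ico 1 n, ENNReal.ofReal (q n j / (-q n n)) * y j)
        + ENNReal.ofReal (q n (n + 1) / (-q n n)) * y (n + 1) := by
  rw [tsum_eq_sum (s := insert (n + 1) (Finset.Ico 1 n)) ?_]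
  · rw [Finset.sum_insert (by simp)]
    rw [add_comm]
    congr 1
    · apply Finset.sum_congr rfl
      intro j hj
      have hj' := Finset.mem_Ico.mp hj
      have h0 : j ≠ 0 := by omega
      have hn : j ≠ n := by omega
      simp [h0, hn, embed]
    · have h0 : n + 1 ≠ 0 := by omega
      have hn : n + 1 ≠ n := by omega
      simp [h0, hn, embed]
  · intro j hj
    simp only [Finset.mem_insert, Finset.mem_Ico, not_or, not_and, not_lt] at hj
    by_cases h0 : j = 0
    · simp [h0]
    · have hjn : n ≤ j := hj.2 (by omega)
      rcases eq_or_ne j n with rfl | hne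
      · simp [h0, embed]
      · have : n + 2 ≤ j := by omega
        simp [h0, embed, hne, sb_zero hsb this]

lemma inv_ofReal (hq : IsQMatrix q) (n : ℕ) :
    (ENNReal.ofReal (-q n n))⁻¹ = ENNReal.ofReal (1 / (-q n n)) := by
  rw [one_div, ← ENNReal.ofReal_inv_of_pos (hq.diag_neg n)]

end YanChenAux

/-- Explicit ergodicity criterion for single birth processes (Yan–Chen). -/
theorem single_birth_ergodic_iff (q : ℕ → ℕ → ℝ)
    (hq : IsQMatrix q) (hirr : MatIrreducible q) (hreg : QRegular q)
    (hsb : IsSingleBirth q)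
    (m : ℕ → ℝ≥0∞)
    (hm : IsMinSol (fun i j => if j = 0 then 0 else embed q i j)
      (fun i => (ENNReal.ofReal (-q i i))⁻¹) m) :
    (∀ i, m i < ⊤) ↔ sbdConst q < ⊤ := by
  have hQ : ∀ n, (0:ℝ) < -q n n := hq.diag_neg
  have hq' : ∀ n, (0:ℝ) < q n (n + 1) := hsb.1
  have heq := hm.1
  simp only at heq
  constructor
  · -- ergodic → d < ∞
    intro hfin
    set ν : ℕ → ℝ := fun n => if n = 0 then (0:ℝ) else (m n).toReal with hν
    have hν0 : ν 0 = 0 := rfl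
    have hνt : ∀ n, 1 ≤ n → ν n = (m n).toReal := by
      intro n hn; simp only [hν]; rw [if_neg (by omega)]
    -- extract real equations
    have real_eq : ∀ n, 1 ≤ n →
        -q n n * ν n = (∑ j ∈ Finset.range n, q n j * ν j) + q n (n + 1) * ν (n + 1) + 1 := by
      intro n hn
      have h := heq n
      rw [conv_tsum hsb, inv_ofReal hq] at h
      have hfin' : ∀ j, m j ≠ ⊤ := fun j => (hfin j).ne
      have hS : (∑ j ∈ Finset.Ico 1 n, ENNReal.ofReal (q n j / (-q n n)) * m j) ≠ ⊤ := by
        rw [ENNReal.sum_ne_top]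
        exact fun j _ => ENNReal.mul_ne_top ENNReal.ofReal_ne_top (hfin' j)
      have hE : ENNReal.ofReal (q n (n + 1) / (-q n n)) * m (n + 1) ≠ ⊤ :=
        ENNReal.mul_ne_top ENNReal.ofReal_ne_top (hfin' (n + 1))
      have h2 := congrArg ENNReal.toReal h
      rw [ENNReal.toReal_add (ENNReal.add_ne_top.mpr ⟨hS, hE⟩) ENNReal.ofReal_ne_top,
        ENNReal.toReal_add hS hE,
        ENNReal.toReal_sum (fun j _ => ENNReal.mul_ne_top ENNReal.ofReal_ne_top (hfin' j)),
        ENNReal.toReal_mul, ENNReal.toReal_ofReal (div_nonneg (hq' n).le (hQ n).le),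
        ENNReal.toReal_ofReal (one_div_nonneg.mpr (hQ n).le)] at h2
      have h3 : ∀ j ∈ Finset.Ico 1 n,
          (ENNReal.ofReal (q n j / (-q n n)) * m j).toReal = q n j / (-q n n) * ν j := by
        intro j hj
        have hj' := Finset.mem_Ico.mp hj
        rw [ENNReal.toReal_mul,
          ENNReal.toReal_ofReal (div_nonneg (hq.offdiag_nonneg n j (by omega)) (hQ n).le),
          hνt j (by omega)]
      rw [Finset.sum_congr rfl h3] at h2
      -- h2 : (m n).toReal = ∑ + q'/Qn * toReal + 1/Qn
      have hrange : ∑ j ∈ Finset.range n, q n j * ν j = ∑ j ∈ Finset.Ico 1 n, q n j * ν j := by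
        rw [Finset.sum_range_eq_add_Ico _ (by omega : 0 < n), hν0, mul_zero, zero_add]
      have hQn : -q n n ≠ 0 := (hQ n).ne'
      have msum : (-q n n) * ∑ j ∈ Finset.Ico 1 n, q n j / (-q n n) * ν j
          = ∑ j ∈ Finset.Ico 1 n, q n j * ν j := by
        rw [Finset.mul_sum]
        exact Finset.sum_congr rfl fun j _ => by
          rw [mul_comm, div_mul_eq_mul_div, div_mul_eq_mul_div, mul_div_assoc,
            div_self hQn, mul_one, mul_comm]
      have e2 : -q n n * (q n (n + 1) / -q n n * (m (n + 1)).toReal)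
          = q n (n + 1) * (m (n + 1)).toReal := by
        rw [mul_comm, div_mul_eq_mul_div, div_mul_eq_mul_div, mul_div_assoc,
          div_self hQn, mul_one, mul_comm]
      have e3 : -q n n * (1 / -q n n) = 1 := by
        rw [mul_one_div, div_self hQn]
      rw [hνt n hn, hνt (n + 1) (by omega), hrange, h2, mul_add, mul_add, msum, e2, e3]
    -- the key strong induction
    have key : ∀ n, ν (n + 1) - ν n = (m 1).toReal * sbF q n 0 - sbd q n := by
      intro n
      induction n using Nat.strong_induction_on with
      | _ n ih =>
        match n with
        | 0 =>
          have hF0 : sbF q 0 0 = 1 := by rw [sbF_eq]; simp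
          have hD0 : sbd q 0 = 0 := by rw [sbd]
          rw [hF0, hD0, hν0, hνt 1 (by omega)]
          ring
        | (k + 1) =>
          have h := (key_equiv hq hsb ν (k + 1)).mp (real_eq (k + 1) (by omega))
          have hsum2 : ∑ j ∈ Finset.range (k + 1),
                (∑ l ∈ Finset.range (j + 1), q (k + 1) l) * (ν (j + 1) - ν j)
              = ∑ j ∈ Finset.range (k + 1),
                (∑ l ∈ Finset.range (j + 1), q (k + 1) l) * ((m 1).toReal * sbF q j 0 - sbd q j) :=
            Finset.sum_congr rfl fun j hj => by rw [ih j (Finset.mem_range.mp hj)]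
          have hexp : ∑ j ∈ Finset.range (k + 1),
                (∑ l ∈ Finset.range (j + 1), q (k + 1) l) * ((m 1).toReal * sbF q j 0 - sbd q j)
              = (m 1).toReal * (∑ j ∈ Finset.range (k + 1),
                  (∑ l ∈ Finset.range (j + 1), q (k + 1) l) * sbF q j 0)
                - ∑ j ∈ Finset.range (k + 1),
                  (∑ l ∈ Finset.range (j + 1), q (k + 1) l) * sbd q j := by
            rw [Finset.mul_sum, ← Finset.sum_sub_distrib]
            exact Finset.sum_congr rfl fun j _ => by ring
          have hF := sbF_rec hsb (n := k + 1) (by omega)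
          have hD := sbd_rec hsb k
          have hfinal : q (k + 1) (k + 2) * (ν (k + 2) - ν (k + 1))
              = q (k + 1) (k + 2) * ((m 1).toReal * sbF q (k + 1) 0 - sbd q (k + 1)) := by
            linear_combination h + hsum2 + hexp - (m 1).toReal * hF + hD
          exact mul_left_cancel₀ (hq' (k + 1)).ne' hfinal
    have tele : ∀ n, ν n = (m 1).toReal * (∑ k ∈ Finset.range n, sbF q k 0)
        - ∑ k ∈ Finset.range n, sbd q k := by
      intro n
      induction n with
      | zero => simp [hν0]
      | succ n ihn =>
        rw [Finset.sum_range_succ, Finset.sum_range_succ]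
        linear_combination ihn + key n
    have hSFpos : ∀ k, 0 < ∑ n ∈ Finset.range (k + 1), sbF q n 0 := by
      intro k
      have h1 : sbF q 0 0 = 1 := by rw [sbF_eq]; simp
      have h2 : sbF q 0 0 ≤ ∑ n ∈ Finset.range (k + 1), sbF q n 0 :=
        Finset.single_le_sum (fun i _ => sbF_nonneg hq hsb i) (Finset.mem_range.mpr (by omega))
      linarith
    refine lt_of_le_of_lt ?_ (ENNReal.ofReal_lt_top : ENNReal.ofReal ((m 1).toReal) < ⊤)
    rw [sbdConst]
    apply iSup_le
    intro k
    apply ENNReal.ofReal_le_ofReal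
    rw [div_le_iff₀ (hSFpos k)]
    have hν1 : 0 ≤ ν (k + 1) := by
      rw [hνt (k + 1) (by omega)]; exact ENNReal.toReal_nonneg
    rw [tele (k + 1)] at hν1
    linarith
  · -- d < ∞ → ergodic
    intro hd i
    set c := (sbdConst q).toReal with hc
    have hSFpos : ∀ k, 0 < ∑ n ∈ Finset.range (k + 1), sbF q n 0 := by
      intro k
      have h1 : sbF q 0 0 = 1 := by rw [sbF_eq]; simp
      have h2 : sbF q 0 0 ≤ ∑ n ∈ Finset.range (k + 1), sbF q n 0 :=
        Finset.single_le_sum (fun i _ => sbF_nonneg hq hsb i) (Finset.mem_range.mpr (by omega))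
      linarith
    have hratio : ∀ k, (∑ n ∈ Finset.range (k + 1), sbd q n)
        ≤ c * (∑ n ∈ Finset.range (k + 1), sbF q n 0) := by
      intro k
      have h1 : ENNReal.ofReal ((∑ n ∈ Finset.range (k + 1), sbd q n)
          / (∑ n ∈ Finset.range (k + 1), sbF q n 0)) ≤ sbdConst q := by
        rw [sbdConst]
        exact le_iSup (fun k => ENNReal.ofReal ((∑ n ∈ Finset.range (k + 1), sbd q n)
          / (∑ n ∈ Finset.range (k + 1), sbF q n 0))) k
      have h2 := ENNReal.toReal_mono hd.ne h1
      rw [ENNReal.toReal_ofReal (div_nonneg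
        (Finset.sum_nonneg fun n _ => sbd_nonneg hq hsb n) (hSFpos k).le)] at h2
      rw [div_le_iff₀ (hSFpos k)] at h2
      exact h2
    set ν : ℕ → ℝ := fun n => c * (∑ k ∈ Finset.range n, sbF q k 0)
      - ∑ k ∈ Finset.range n, sbd q k with hν
    have hν0 : ν 0 = 0 := by simp [hν]
    have hνnn : ∀ n, 0 ≤ ν n := by
      intro n
      match n with
      | 0 => rw [hν0]
      | (k + 1) => exact sub_nonneg.mpr (hratio k)
    have hδ : ∀ n, ν (n + 1) - ν n = c * sbF q n 0 - sbd q n := by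
      intro n
      simp only [hν, Finset.sum_range_succ]
      ring
    have real_eq : ∀ n, 1 ≤ n →
        -q n n * ν n = (∑ j ∈ Finset.range n, q n j * ν j) + q n (n + 1) * ν (n + 1) + 1 := by
      intro n hn
      apply (key_equiv hq hsb ν n).mpr
      match n, hn with
      | (k + 1), _ =>
        have hsum2 : ∑ j ∈ Finset.range (k + 1),
              (∑ l ∈ Finset.range (j + 1), q (k + 1) l) * (ν (j + 1) - ν j)
            = ∑ j ∈ Finset.range (k + 1),
              (∑ l ∈ Finset.range (j + 1), q (k + 1) l) * (c * sbF q j 0 - sbd q j) :=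
          Finset.sum_congr rfl fun j _ => by rw [hδ j]
        have hexp : ∑ j ∈ Finset.range (k + 1),
              (∑ l ∈ Finset.range (j + 1), q (k + 1) l) * (c * sbF q j 0 - sbd q j)
            = c * (∑ j ∈ Finset.range (k + 1),
                (∑ l ∈ Finset.range (j + 1), q (k + 1) l) * sbF q j 0)
              - ∑ j ∈ Finset.range (k + 1),
                (∑ l ∈ Finset.range (j + 1), q (k + 1) l) * sbd q j := by
          rw [Finset.mul_sum, ← Finset.sum_sub_distrib]
          exact Finset.sum_congr rfl fun j _ => by ring
        have hF := sbF_rec hsb (n := k + 1) (by omega)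
        have hD := sbd_rec hsb k
        linear_combination q (k + 1) (k + 2) * hδ (k + 1) - hsum2 - hexp + c * hF - hD
    set X : ℕ → ℝ≥0∞ := fun n =>
      if n = 0 then ENNReal.ofReal (ν 1 + 1 / (-q 0 0)) else ENNReal.ofReal (ν n) with hX
    have hXsol : ∀ i, X i = (∑' j, (if j = 0 then 0 else embed q i j) * X j)
        + (ENNReal.ofReal (-q i i))⁻¹ := by
      intro n
      rw [conv_tsum hsb X n, inv_ofReal hq n]
      match n with
      | 0 =>
        rw [show Finset.Ico 1 0 = ∅ from Finset.Ico_eq_empty (by omega), Finset.sum_empty, zero_add]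
        have hq01 : q 0 1 = -q 0 0 := by
          have := row_id hq hsb 0
          simpa using this.symm
        rw [hq01, div_self (hQ 0).ne']
        have hX1 : X 1 = ENNReal.ofReal (ν 1) := by rw [hX]; norm_num
        rw [hX1, ENNReal.ofReal_one, one_mul,
          ← ENNReal.ofReal_add (hνnn 1) (one_div_nonneg.mpr (hQ 0).le)]
        rfl
      | (k + 1) =>
        have hnn : (1:ℕ) ≤ k + 1 := by omega
        have hXj : ∀ j, 1 ≤ j → X j = ENNReal.ofReal (ν j) := by
          intro j hj; rw [hX]; simp only; rw [if_neg (by omega)]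
        have t1 : ∀ j ∈ Finset.Ico 1 (k + 1),
            ENNReal.ofReal (q (k + 1) j / (-q (k + 1) (k + 1))) * X j
              = ENNReal.ofReal (q (k + 1) j / (-q (k + 1) (k + 1)) * ν j) := by
          intro j hj
          have hj' := Finset.mem_Ico.mp hj
          rw [hXj j (by omega), ← ENNReal.ofReal_mul
            (div_nonneg (hq.offdiag_nonneg (k + 1) j (by omega)) (hQ (k + 1)).le)]
        rw [Finset.sum_congr rfl t1, hXj (k + 2) (by omega),
          ← ENNReal.ofReal_mul (div_nonneg (hq' (k + 1)).le (hQ (k + 1)).le),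
          ← ENNReal.ofReal_sum_of_nonneg (fun j hj => by
            have hj' := Finset.mem_Ico.mp hj
            exact mul_nonneg (div_nonneg (hq.offdiag_nonneg (k + 1) j (by omega))
              (hQ (k + 1)).le) (hνnn j)),
          ← ENNReal.ofReal_add (Finset.sum_nonneg fun j hj => by
            have hj' := Finset.mem_Ico.mp hj
            exact mul_nonneg (div_nonneg (hq.offdiag_nonneg (k + 1) j (by omega))
              (hQ (k + 1)).le) (hνnn j))
            (mul_nonneg (div_nonneg (hq' (k + 1)).le (hQ (k + 1)).le) (hνnn (k + 2))),
          ← ENNReal.ofReal_add (add_nonneg (Finset.sum_nonneg fun j hj => by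
              have hj' := Finset.mem_Ico.mp hj
              exact mul_nonneg (div_nonneg (hq.offdiag_nonneg (k + 1) j (by omega))
                (hQ (k + 1)).le) (hνnn j))
            (mul_nonneg (div_nonneg (hq' (k + 1)).le (hQ (k + 1)).le) (hνnn (k + 2))))
            (one_div_nonneg.mpr (hQ (k + 1)).le),
          hXj (k + 1) (by omega)]
        congr 1
        have h := real_eq (k + 1) (by omega)
        have hrange : ∑ j ∈ Finset.range (k + 1), q (k + 1) j * ν j
            = ∑ j ∈ Finset.Ico 1 (k + 1), q (k + 1) j * ν j := by
          rw [Finset.sum_range_eq_add_Ico _ (by omega : 0 < k + 1), hν0, mul_zero, zero_add]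
        rw [hrange] at h
        have msum : ∑ j ∈ Finset.Ico 1 (k + 1), q (k + 1) j / (-q (k + 1) (k + 1)) * ν j
            = (∑ j ∈ Finset.Ico 1 (k + 1), q (k + 1) j * ν j) / (-q (k + 1) (k + 1)) := by
          rw [Finset.sum_div]
          exact Finset.sum_congr rfl fun j _ => by ring
        rw [msum]
        have hQn := (hQ (k + 1)).ne'
        refine mul_left_cancel₀ hQn ?_
        rw [mul_add, mul_add,
          mul_comm (-q (k + 1) (k + 1))
            ((∑ j ∈ Finset.Ico 1 (k + 1), q (k + 1) j * ν j) / -q (k + 1) (k + 1)),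
          div_mul_cancel₀ _ hQn,
          ← mul_assoc,
          mul_comm (-q (k + 1) (k + 1)) (q (k + 1) (k + 1 + 1) / -q (k + 1) (k + 1)),
          div_mul_cancel₀ _ hQn, mul_one_div, div_self hQn]
        exact h
    have hle := hm.2 X hXsol i
    refine lt_of_le_of_lt hle ?_
    rw [hX]
    dsimp only
    split <;> exact ENNReal.ofReal_lt_top
end
end

section
/- Let α_i ≥ 0 (i ≥ 1) with α_i > 0 for infinitely many i, and let Q be the Q-matrix on ℤ≥0 with q(i,i+1) = i+1 for i ≥ 0, q(i,0) = α_i for i ≥ 1, and all other off-diagonal entries 0 (so q_0 = 1, q_i = i+1+α_i, hence inf_i q_i ≥ 1). If lim_{i→∞} α_i = 0, then the Q-process is not exponentially ergodic (with H = {0}): for every λ ∈ (0, inf_i q_i), the minimal nonnegative solution (e_i(λ)) of x_i = (q_i/(q_i−λ))·Σ_{j∉{0}} Π(i,j)·x_j + 1/(q_i−λ) (i ∈ ℤ≥0) satisfies e_i(λ) = ∞ for some i. -/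
open scoped ENNReal NNReal BigOperators Classical Topology
open Filter Set

noncomputable section

/-- If α_i → 0, the catastrophe process is not exponentially ergodic. -/
theorem catQ_non_exponentially_ergodic (a : ℕ → ℝ)
    (ha : ∀ i, 1 ≤ i → 0 ≤ a i) (hinf : {i : ℕ | 1 ≤ i ∧ 0 < a i}.Infinite)
    (hlim : Tendsto a atTop (𝓝 0)) :
    ∀ lam ∈ Set.Ioo (0 : ℝ) (⨅ i, -catQ a i i), ∀ e : ℕ → ℝ≥0∞,
      IsMinSol
        (fun i j => if j = 0 then 0 else
          ENNReal.ofReal ((-catQ a i i) / (-catQ a i i - lam)) * embed (catQ a) i j)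
        (fun i => ENNReal.ofReal (1 / (-catQ a i i - lam))) e →
      ∃ i, e i = ⊤ := by
  intro lam hlam e hmin
  obtain ⟨hlam0, hlamlt⟩ := hlam
  obtain ⟨heq, -⟩ := hmin
  by_contra hcon
  push_neg at hcon
  -- diagonal entries
  have hq : ∀ i : ℕ, -catQ a i i = ((i : ℝ) + 1) + (if 1 ≤ i then a i else 0) := by
    intro i
    have h1 : ¬ (i = i + 1) := by omega
    have h2 : ¬ (i = 0 ∧ 1 ≤ i) := by omega
    simp only [catQ, if_neg h1, if_neg h2, if_pos rfl, if_true, neg_neg]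
  have hqge : ∀ i : ℕ, ((i : ℝ) + 1) ≤ -catQ a i i := by
    intro i; rw [hq]
    split_ifs with hi
    · have := ha i hi; linarith
    · linarith
  have hbdd : BddBelow (Set.range fun i : ℕ => -catQ a i i) := by
    refine ⟨1, ?_⟩
    rintro x ⟨i, rfl⟩
    have h1 := hqge i
    have h2 : (0 : ℝ) ≤ (i : ℝ) := Nat.cast_nonneg i
    simpa using le_trans (by linarith) h1
  have hlamq : ∀ i : ℕ, lam < -catQ a i i := fun i =>
    lt_of_lt_of_le hlamlt (ciInf_le hbdd i)
  have hpos : ∀ i : ℕ, 0 < -catQ a i i - lam := fun i => sub_pos.mpr (hlamq i)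
  have hq0 : ∀ i : ℕ, 0 < -catQ a i i := fun i => lt_trans hlam0 (hlamq i)
  -- the reduced one-step equation
  have key : ∀ i : ℕ,
      e i = ENNReal.ofReal ((-catQ a i i) / (-catQ a i i - lam)) *
              ENNReal.ofReal (((i : ℝ) + 1) / (-catQ a i i)) * e (i + 1) +
            ENNReal.ofReal (1 / (-catQ a i i - lam)) := by
    intro i
    have hzero : ∀ j : ℕ, j ≠ i + 1 →
        (if j = 0 then 0 else
          ENNReal.ofReal ((-catQ a i i) / (-catQ a i i - lam)) * embed (catQ a) i j) * e j
          = 0 := by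
      intro j hj
      by_cases hj0 : j = 0
      · simp [hj0]
      · by_cases hji : j = i
        · simp [embed, hji]
        · have hcz : catQ a i j = 0 := by
            simp only [catQ]
            rw [if_neg hj, if_neg (by tauto), if_neg hji]
          simp [embed, hj0, hji, hcz]
    have h1 := heq i
    rw [tsum_eq_single (i + 1) hzero] at h1
    have hne0 : ¬ (i + 1 = 0) := by omega
    have hnei : ¬ (i + 1 = i) := by omega
    have hcv : catQ a i (i + 1) = (i : ℝ) + 1 := by
      simp only [catQ, if_pos rfl]; push_cast; ring
    rw [h1, if_neg hne0]
    simp [embed, hnei, hcv]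
  -- choose a threshold M beyond which a k < lam
  obtain ⟨N, hN⟩ := Filter.eventually_atTop.mp (hlim.eventually_lt_const hlam0)
  set M : ℕ := max N 1 with hM
  -- one-step estimate
  have step : ∀ k : ℕ, M ≤ k →
      e (k + 1) + ENNReal.ofReal (1 / ((k : ℝ) + 2)) ≤ e k := by
    intro k hk
    have hak : a k < lam := hN k (le_trans (le_max_left _ _) hk)
    have hk1 : 1 ≤ k := le_trans (le_max_right _ _) hk
    have hqk : -catQ a k k = ((k : ℝ) + 1) + a k := by
      rw [hq, if_pos hk1]
    have hpk := hpos k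
    have hq0k := hq0 k
    -- the coefficient is ≥ 1
    have hc : (1 : ℝ≥0∞) ≤ ENNReal.ofReal ((-catQ a k k) / (-catQ a k k - lam)) *
        ENNReal.ofReal (((k : ℝ) + 1) / (-catQ a k k)) := by
      rw [← ENNReal.ofReal_mul (by positivity)]
      rw [ENNReal.one_le_ofReal]
      have hval : (-catQ a k k) / (-catQ a k k - lam) * (((k : ℝ) + 1) / (-catQ a k k))
          = ((k : ℝ) + 1) / (-catQ a k k - lam) := by
        rw [div_mul_div_comm, mul_comm (-catQ a k k - lam) (-catQ a k k),
          mul_div_mul_left _ _ (ne_of_gt hq0k)]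
      rw [hval, le_div_iff₀ hpk, one_mul, hqk]
      linarith
    -- the inhomogeneous term is ≥ 1/(k+2)
    have hg : ENNReal.ofReal (1 / ((k : ℝ) + 2)) ≤
        ENNReal.ofReal (1 / (-catQ a k k - lam)) := by
      apply ENNReal.ofReal_le_ofReal
      apply one_div_le_one_div_of_le hpk
      rw [hqk]; linarith
    calc e (k + 1) + ENNReal.ofReal (1 / ((k : ℝ) + 2))
        ≤ ENNReal.ofReal ((-catQ a k k) / (-catQ a k k - lam)) *
            ENNReal.ofReal (((k : ℝ) + 1) / (-catQ a k k)) * e (k + 1) +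
          ENNReal.ofReal (1 / (-catQ a k k - lam)) :=
          add_le_add (le_mul_of_one_le_left zero_le hc) hg
      _ = e k := (key k).symm
  -- iterate the estimate
  set f : ℕ → ℝ≥0∞ := fun k => ENNReal.ofReal (1 / ((M : ℝ) + k + 2)) with hf
  have ind : ∀ m : ℕ, e (M + m) + ∑ k ∈ Finset.range m, f k ≤ e M := by
    intro m
    induction m with
    | zero => simp
    | succ m ih =>
      have hstep := step (M + m) (Nat.le_add_right M m)
      have hcast : ((M + m : ℕ) : ℝ) + 2 = (M : ℝ) + (m : ℝ) + 2 := by push_cast; ring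
      rw [hcast] at hstep
      calc e (M + (m + 1)) + ∑ k ∈ Finset.range (m + 1), f k
          = (e (M + m + 1) + f m) + ∑ k ∈ Finset.range m, f k := by
            rw [Finset.sum_range_succ, show M + (m + 1) = M + m + 1 by ring]
            ring
        _ ≤ e (M + m) + ∑ k ∈ Finset.range m, f k := by
            exact add_le_add_left hstep _
        _ ≤ e M := ih
  have hle : ∀ m : ℕ, ∑ k ∈ Finset.range m, f k ≤ e M := fun m =>
    le_trans (le_add_self) (ind m)
  -- the harmonic series diverges
  have htop : (∑' k : ℕ, f k) = ⊤ := by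
    by_contra hfin
    have hs : Summable (fun k : ℕ => 1 / ((M : ℝ) + k + 2)) := by
      have h1 := ENNReal.summable_toReal hfin
      refine h1.congr fun k => ?_
      simp only [hf]
      rw [ENNReal.toReal_ofReal (by positivity)]
    have hs2 : Summable (fun n : ℕ => 1 / (n : ℝ)) := by
      rw [← summable_nat_add_iff (M + 2)]
      refine hs.congr fun k => ?_
      push_cast; ring_nf
    exact Real.not_summable_one_div_natCast hs2
  have hEM : e M = ⊤ := by
    rw [← top_le_iff, ← htop, ENNReal.tsum_eq_iSup_sum]
    refine iSup_le fun s => ?_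
    obtain ⟨m, hm⟩ := s.exists_nat_subset_range
    exact le_trans (Finset.sum_le_sum_of_subset hm) (hle m)
  exact hcon M hEM
end
end

section
/- Let Q be an irreducible regular Q-matrix on a countable set E with a distinguished state 0, and assume the embedding chain of Q is recurrent. If inf_{i≠0} q(i,0) > 0, then the Q-process is strongly ergodic, i.e. sup_{i∈E} 𝔼_i σ_0 < ∞. -/
open scoped ENNReal NNReal BigOperators Classical Topology
open Filter Set

noncomputable section

/-- Monotone convergence for tsum in ℝ≥0∞. -/
lemma my_tsum_iSup_mono {α : Type*} (f : ℕ → α → ℝ≥0∞) (hf : ∀ a, Monotone fun n => f n a) :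
    ∑' a, ⨆ n, f n a = ⨆ n, ∑' a, f n a := by
  rw [ENNReal.tsum_eq_iSup_sum]
  have : ∀ s : Finset α, (∑ a ∈ s, ⨆ n, f n a) = ⨆ n, ∑ a ∈ s, f n a := fun s =>
    ENNReal.finsetSum_iSup_of_monotone (f := fun a n => f n a) hf
  simp_rw [this]
  rw [iSup_comm]
  simp_rw [← ENNReal.tsum_eq_iSup_sum]

/-- Each row of the embedding chain sums to 1. -/
lemma my_sum_embed {E : Type*} {q : E → E → ℝ} (hq : IsQMatrix q) (i : E) :
    ∑' j, embed q i j = 1 := by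
  have hpos := hq.diag_neg i
  have hrow := hq.row_hasSum i
  have hdiv : HasSum (fun j => (if j = i then 0 else q i j) / (-q i i)) 1 := by
    simpa [div_self hpos.ne'] using hrow.div_const (-q i i)
  have hnn : ∀ j, 0 ≤ (if j = i then 0 else q i j) / (-q i i) := by
    intro j
    by_cases h : j = i
    · simp [h]
    · rw [if_neg h]
      exact div_nonneg (hq.offdiag_nonneg i j (fun e => h e.symm)) hpos.le
  have heq : ∀ j, embed q i j = ENNReal.ofReal ((if j = i then 0 else q i j) / (-q i i)) := by
    intro j
    by_cases h : j = i <;> simp [embed, h]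
  calc ∑' j, embed q i j
      = ∑' j, ENNReal.ofReal ((if j = i then 0 else q i j) / (-q i i)) := by
        exact tsum_congr heq
    _ = ENNReal.ofReal (∑' j, (if j = i then 0 else q i j) / (-q i i)) :=
        (ENNReal.ofReal_tsum_of_nonneg hnn hdiv.summable).symm
    _ = 1 := by rw [hdiv.tsum_eq]; simp
/-- If the jump rates to a fixed state are uniformly positive and the process is recurrent,
then it is strongly ergodic. -/
theorem strongly_ergodic_of_uniform_jump_rate {E : Type*} [Countable E]
    (q : E → E → ℝ) (o : E)
    (hq : IsQMatrix q) (hirr : MatIrreducible q) (hreg : QRegular q)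
    (hrec : RecurrentAt (embed q) o)
    (hc : ∃ c : ℝ, 0 < c ∧ ∀ i, i ≠ o → c ≤ q i o)
    (m : E → ℝ≥0∞)
    (hm : IsMinSol (fun i j => if j = o then 0 else embed q i j)
      (fun i => (ENNReal.ofReal (-q i i))⁻¹) m) :
    (⨆ i, m i) < ⊤ := by
  obtain ⟨c, hc0, hco⟩ := hc
  set A : E → E → ℝ≥0∞ := fun i j => if j = o then 0 else embed q i j with hAdef
  set g : E → ℝ≥0∞ := fun i => (ENNReal.ofReal (-q i i))⁻¹ with hgdef
  set c' : ℝ≥0∞ := (ENNReal.ofReal c)⁻¹ with hc'def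
  have hcne0 : ENNReal.ofReal c ≠ 0 := (ENNReal.ofReal_pos.2 hc0).ne'
  have hc'c : c' * ENNReal.ofReal c = 1 := ENNReal.inv_mul_cancel hcne0 ENNReal.ofReal_ne_top
  set B : E → ℝ≥0∞ := fun i => if i = o then c' + g o else c' with hBdef
  -- key: row sums of A
  have hArow : ∀ i, embed q i o + ∑' j, A i j = 1 := by
    intro i
    have h := ENNReal.tsum_eq_add_tsum_ite (f := embed q i) o
    rw [my_sum_embed hq i] at h
    exact h.symm
  -- g i ≤ c' * embed q i o for i ≠ o
  have hkey : ∀ i, i ≠ o → g i ≤ c' * embed q i o := by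
    intro i hio
    have hpos := hq.diag_neg i
    have h1 : ENNReal.ofReal c / ENNReal.ofReal (-q i i) ≤ embed q i o := by
      have : ENNReal.ofReal (c / (-q i i)) ≤ ENNReal.ofReal (q i o / (-q i i)) :=
        ENNReal.ofReal_le_ofReal (div_le_div_of_nonneg_right (hco i hio) hpos.le)
      rw [ENNReal.ofReal_div_of_pos hpos] at this
      simpa [embed, Ne.symm hio] using this
    calc g i = c' * (ENNReal.ofReal c / ENNReal.ofReal (-q i i)) := by
          rw [div_eq_mul_inv, ← mul_assoc, hc'c, one_mul]
      _ ≤ c' * embed q i o := mul_le_mul_right h1 _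
  -- B is a supersolution
  have hsup : ∀ i, (∑' j, A i j * B j) + g i ≤ B i := by
    intro i
    have hAB : ∀ j, A i j * B j = A i j * c' := by
      intro j
      by_cases h : j = o <;> simp [hAdef, hBdef, h]
    rw [tsum_congr hAB, ENNReal.tsum_mul_right]
    by_cases hio : i = o
    · subst hio
      have h1 : (∑' j, A i j) ≤ 1 := le_add_self.trans (hArow i).le
      simp only [hBdef, if_pos rfl]
      exact add_le_add_left (by simpa using mul_le_mul_left h1 c') _
    · simp only [hBdef, if_neg hio]
      calc (∑' j, A i j) * c' + g i
          ≤ (∑' j, A i j) * c' + c' * embed q i o := add_le_add_right (hkey i hio) _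
        _ = c' * (embed q i o + ∑' j, A i j) := by ring
        _ = c' := by rw [hArow i, mul_one]
  -- iterates
  set iter : ℕ → E → ℝ≥0∞ := fun n =>
    Nat.rec (fun _ => 0) (fun _ x i => (∑' j, A i j * x j) + g i) n with hiter
  have hiter0 : ∀ i, iter 0 i = 0 := fun _ => rfl
  have hiterS : ∀ n i, iter (n + 1) i = (∑' j, A i j * iter n j) + g i := fun _ _ => rfl
  have hmono : ∀ n i, iter n i ≤ iter (n + 1) i := by
    intro n
    induction n with
    | zero => intro i; simp [hiter0]
    | succ n ih =>
      intro i
      rw [hiterS n i, hiterS (n + 1) i]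
      exact add_le_add_left (ENNReal.tsum_le_tsum fun j => mul_le_mul_right (ih j) _) _
  have hmono' : ∀ i, Monotone fun n => iter n i := fun i =>
    monotone_nat_of_le_succ fun n => hmono n i
  have hbd : ∀ n i, iter n i ≤ B i := by
    intro n
    induction n with
    | zero => intro i; simp [hiter0]
    | succ n ih =>
      intro i
      rw [hiterS]
      exact le_trans
        (add_le_add_left (ENNReal.tsum_le_tsum fun j => mul_le_mul_right (ih j) _) _)
        (hsup i)
  -- the limit solves the equation
  set x : E → ℝ≥0∞ := fun i => ⨆ n, iter n i with hxdef
  have hxsol : ∀ i, x i = (∑' j, A i j * x j) + g i := by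
    intro i
    have h1 : (∑' j, A i j * x j) = ⨆ n, ∑' j, A i j * iter n j := by
      simp_rw [hxdef, ENNReal.mul_iSup]
      exact my_tsum_iSup_mono _ fun j => fun a b hab =>
        mul_le_mul_right (hmono' j hab) _
    rw [h1, ENNReal.iSup_add]
    simp_rw [← hiterS]
    apply le_antisymm
    · exact iSup_le fun n => le_trans (hmono n i) (le_iSup (fun n => iter (n + 1) i) n)
    · exact iSup_le fun n => le_iSup (fun n => iter n i) (n + 1)
  -- conclude
  have hmx : ∀ i, m i ≤ x i := hm.2 x hxsol
  have hxB : ∀ i, x i ≤ B i := fun i => iSup_le fun n => hbd n i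
  have hBtop : ∀ i, B i ≤ c' + g o := by
    intro i
    by_cases h : i = o <;> simp [hBdef, h, le_add_right]
  have hfin : c' + g o < ⊤ := by
    have h1 : c' ≠ ⊤ := by simpa [hc'def] using hcne0
    have h2 : g o ≠ ⊤ := by
      simp only [hgdef, ne_eq, ENNReal.inv_eq_top]
      exact (ENNReal.ofReal_pos.2 (hq.diag_neg o)).ne'
    exact ENNReal.add_lt_top.2 ⟨h1.lt_top, h2.lt_top⟩
  exact lt_of_le_of_lt
    (iSup_le fun i => (hmx i).trans ((hxB i).trans (hBtop i))) hfin
end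
end
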